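/- arXiv:2204.06432 — 2 statements merged into one kernel-verified Lean document; each statement's English description precedes it below -/
import Mathlib

section
/- Let Λ be a field with a non-Archimedean additive valuation val, let S ⊂ ℤⁿ be a finite nonempty set, and let c: S → Λ* be nonzero coefficients. If z ∈ (Λ*)ⁿ satisfies ∑_{α ∈ S} c_α z^α = 0, then the minimum over α ∈ S of val(c_α) + ⟨α, val z⟩ is attained for at least two distinct elements of S, where val z = (val z₁, …, val z_n). Equivalently, val z lies in the tropical hypersurface of the tropical polynomial f(q) = min_{α∈S}(val(c_α) + ⟨α, q⟩). -/
/-! If the minimum of `val (c_α z^α)` over `α ∈ S` were attained only at `α`, then by the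
ultrametric inequality the remaining terms would sum to something of valuation strictly larger
than `val (c_α z^α)`; but that sum is `-c_α z^α`, which has the same valuation. -/

open Finset

namespace AddValuation

section Ring

variable {R Γ₀ : Type*} [Ring R] [LinearOrderedAddCommMonoidWithTop Γ₀]

def ofMapOneNeTop (v : R → Γ₀) (hzero : v 0 = ⊤) (hone : v 1 ≠ ⊤)
    (hadd : ∀ x y, min (v x) (v y) ≤ v (x + y)) (hmul : ∀ x y, v (x * y) = v x + v y) :
    AddValuation R Γ₀ :=
  of v hzero ((add_right_inj_of_ne_top hone).1 <| by rw [← hmul, mul_one, add_zero]) hadd hmul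

theorem map_prod {S ι : Type*} [CommRing S] (v : AddValuation S Γ₀) (s : Finset ι) (f : ι → S) :
    v (∏ i ∈ s, f i) = ∑ i ∈ s, v (f i) := by
  classical
  induction s using Finset.induction_on with
  | empty => simp
  | insert a s ha ih => rw [prod_insert ha, sum_insert ha, map_mul, ih]

theorem exists_ne_map_le_of_sum_eq_zero (v : AddValuation R Γ₀) {ι : Type*} {s : Finset ι}
    {f : ι → R} (hsum : ∑ j ∈ s, f j = 0) {i : ι} (hi : i ∈ s) (hfi : v (f i) ≠ ⊤) :
    ∃ j ∈ s, j ≠ i ∧ v (f j) ≤ v (f i) := by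
  classical
  by_contra! h
  have hrest : v (f i) < v (∑ j ∈ s.erase i, f j) :=
    v.map_lt_sum hfi fun j hj => h j (mem_of_mem_erase hj) (ne_of_mem_erase hj)
  have hfi_eq : f i = -∑ j ∈ s.erase i, f j := by
    rw [eq_neg_iff_add_eq_zero, add_sum_erase s f hi, hsum]
  rw [hfi_eq, map_neg] at hrest
  exact hrest.false

end Ring

section Field

variable {K : Type*} [Field K] (v : AddValuation K (WithTop ℝ))

theorem map_zpow_of_eq_coe {x : K} {r : ℝ} (hx : v x = r) (k : ℤ) :
    v (x ^ k) = ((k * r : ℝ) : WithTop ℝ) := by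
  cases k with
  | ofNat m =>
    rw [Int.ofNat_eq_natCast, zpow_natCast, map_pow, hx, ← WithTop.coe_nsmul, nsmul_eq_mul]
    congr 1
  | negSucc m =>
    rw [zpow_negSucc, map_inv, map_pow, hx, ← WithTop.coe_nsmul,
      ← WithTop.LinearOrderedAddCommGroup.coe_neg, nsmul_eq_mul]
    congr 1
    push_cast
    ring

theorem map_monomial_of_eq_coe {ι : Type*} [Fintype ι] {z : ι → K} {vz : ι → ℝ}
    (hz : ∀ i, v (z i) = vz i) (α : ι → ℤ) :
    v (∏ i, z i ^ α i) = ((∑ i, (α i : ℝ) * vz i : ℝ) : WithTop ℝ) := by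
  rw [map_prod, WithTop.coe_sum]
  exact sum_congr rfl fun i _ => v.map_zpow_of_eq_coe (hz i) (α i)

end Field

end AddValuation

theorem root_tropicalizes_to_tropical_hypersurface_general {Λ : Type*} [Field Λ]
    (val : Λ → WithTop ℝ)
    (hval0 : ∀ x, val x = ⊤ ↔ x = 0)
    (hvalmul : ∀ x y, val (x * y) = val x + val y)
    (hvaladd : ∀ x y, min (val x) (val y) ≤ val (x + y))
    (n : ℕ) (S : Finset (Fin n → ℤ)) (hS : S.Nonempty)
    (c : (Fin n → ℤ) → Λ)
    (z : Fin n → Λ)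
    (vz : Fin n → ℝ) (hvz : ∀ i, val (z i) = (vz i : WithTop ℝ))
    (vc : (Fin n → ℤ) → ℝ) (hvc : ∀ α ∈ S, val (c α) = (vc α : WithTop ℝ))
    (hroot : ∑ α ∈ S, c α * ∏ i, z i ^ (α i) = 0) :
    ∃ α ∈ S, ∃ β ∈ S, α ≠ β ∧
      (∀ γ ∈ S, vc α + ∑ i, (α i : ℝ) * vz i ≤ vc γ + ∑ i, (γ i : ℝ) * vz i) ∧
      vc α + ∑ i, (α i : ℝ) * vz i = vc β + ∑ i, (β i : ℝ) * vz i := by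
  let v := AddValuation.ofMapOneNeTop val ((hval0 0).2 rfl) (by simp [hval0]) hvaladd hvalmul
  let w : (Fin n → ℤ) → ℝ := fun α => vc α + ∑ i, (α i : ℝ) * vz i
  have hterm : ∀ γ ∈ S, v (c γ * ∏ i, z i ^ γ i) = w γ := fun γ hγ => by
    rw [v.map_mul, v.map_monomial_of_eq_coe hvz, show v (c γ) = vc γ from hvc γ hγ,
      ← WithTop.coe_add]
  obtain ⟨α, hαS, hαmin⟩ := S.exists_min_image w hS
  obtain ⟨β, hβS, hβα, hβle⟩ := v.exists_ne_map_le_of_sum_eq_zero hroot hαS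
    (by rw [hterm α hαS]; exact WithTop.coe_ne_top)
  rw [hterm β hβS, hterm α hαS, WithTop.coe_le_coe] at hβle
  exact ⟨α, hαS, β, hβS, hβα.symm, hαmin, le_antisymm (hαmin β hβS) hβle⟩

/-- Kapranov-type statement: if `z ∈ (Λ*)ⁿ` is a root of `∑_{α ∈ S} c_α z^α`, then the
minimum of `val (c_α) + ⟨α, val z⟩` over `α ∈ S` is attained at least twice, i.e. `val z`
lies in the tropical hypersurface of `f(q) = min_α (val (c_α) + ⟨α, q⟩)`. -/
theorem root_tropicalizes_to_tropical_hypersurface {Λ : Type*} [Field Λ]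
    (val : Λ → WithTop ℝ)
    (hval0 : ∀ x, val x = ⊤ ↔ x = 0)
    (hvalmul : ∀ x y, val (x * y) = val x + val y)
    (hvaladd : ∀ x y, min (val x) (val y) ≤ val (x + y))
    (n : ℕ) (S : Finset (Fin n → ℤ)) (hS : S.Nonempty)
    (c : (Fin n → ℤ) → Λ) (hc : ∀ α ∈ S, c α ≠ 0)
    (z : Fin n → Λ) (hz : ∀ i, z i ≠ 0)
    (vz : Fin n → ℝ) (hvz : ∀ i, val (z i) = (vz i : WithTop ℝ))
    (vc : (Fin n → ℤ) → ℝ) (hvc : ∀ α ∈ S, val (c α) = (vc α : WithTop ℝ))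
    (hroot : ∑ α ∈ S, c α * ∏ i, z i ^ (α i) = 0) :
    ∃ α ∈ S, ∃ β ∈ S, α ≠ β ∧
      (∀ γ ∈ S, vc α + ∑ i, (α i : ℝ) * vz i ≤ vc γ + ∑ i, (γ i : ℝ) * vz i) ∧
      vc α + ∑ i, (α i : ℝ) * vz i = vc β + ∑ i, (β i : ℝ) * vz i :=
  root_tropicalizes_to_tropical_hypersurface_general val hval0 hvalmul hvaladd n S hS c z vz hvz vc
    hvc hroot
end

section
/- Let P ⊂ ℝⁿ be a nonempty set and let 𝒪_P be the set of families (f_A)_{A ∈ ℤⁿ} of Novikov field elements such that for every p ∈ P, val(f_A) + ⟨A, p⟩ → ∞ as |A| → ∞. Then 𝒪_P is closed under addition and under the convolution product (f · g)_A = ∑_{B + C = A} f_B g_C; in particular, each coefficient (f·g)_A is a convergent (valuation-summable) sum in Λ, and f·g again lies in 𝒪_P. Hence 𝒪_P is a commutative ring. -/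
/-!
Write `w_f(A) = val (f_A) + ⟨A, p⟩`. Membership in `𝒪_P` says that `w_f → ∞` along the
cofinite filter of `ℤⁿ`. Such a function is bounded below, so `(B, C) ↦ w_f(B) + w_g(C)` tends
to `∞` on `ℤⁿ × ℤⁿ`, and `val (f_B g_C) + ⟨B + C, p⟩ = w_f(B) + w_g(C)`. Restricting to the
fibre `B + C = A` makes the `A`-th convolution coefficient a summable family (any one point of
`P` will do for this), and pushing forward along `(B, C) ↦ B + C` shows that `w_{f·g} → ∞`.
Addition is the ultrametric inequality.
-/

/-- Membership in the polytope algebra `𝒪_P`: for every `p ∈ P`,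
`val (f_A) + ⟨A, p⟩ → ∞` as `|A| → ∞`. -/
def MemPolytopeAlgebra {n : ℕ} (P : Set (Fin n → ℝ))
    (f : (Fin n → ℤ) → HahnSeries ℝ ℂ) : Prop :=
  ∀ p ∈ P, ∀ M : ℝ, ∃ N : ℕ, ∀ A : Fin n → ℤ, N ≤ ∑ i, (A i).natAbs →
    (M : WithTop ℝ) ≤ (HahnSeries.addVal ℝ ℂ) (f A) + ((∑ i, (A i : ℝ) * p i : ℝ) : WithTop ℝ)

open Filter Function HahnSeries

def TendstoTopCofinite {α Γ : Type*} [Preorder Γ] (v : α → WithTop Γ) : Prop :=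
  ∀ M : Γ, ∀ᶠ a in cofinite, (M : WithTop Γ) ≤ v a

theorem WithTop.coe_le_add_coe_iff {Γ : Type*} [AddCommGroup Γ] [LinearOrder Γ]
    [IsOrderedAddMonoid Γ] {x : WithTop Γ} {M c : Γ} :
    (M : WithTop Γ) ≤ x + c ↔ ((M - c : Γ) : WithTop Γ) ≤ x := by
  induction x using WithTop.recTopCoe with
  | top => simp
  | coe x => norm_cast; exact sub_le_iff_le_add.symm

namespace TendstoTopCofinite

variable {α β Γ : Type*}

section LinearOrder

variable [LinearOrder Γ] {v : α → WithTop Γ}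

theorem exists_forall_coe_le [Nonempty Γ] (hv : TendstoTopCofinite v) :
    ∃ c : Γ, ∀ a, (c : WithTop Γ) ≤ v a := by
  obtain ⟨M⟩ := ‹Nonempty Γ›
  obtain ⟨b, hb⟩ := ((eventually_cofinite.1 (hv M)).image v).bddBelow
  refine ⟨min M (b.untopD M), fun a => ?_⟩
  by_cases ha : (M : WithTop Γ) ≤ v a
  · exact (WithTop.coe_le_coe.2 (min_le_left _ _)).trans ha
  · exact (WithTop.coe_le_coe.2 (min_le_right _ _)).trans
      ((WithTop.coe_untopD_le b M).trans (hb ⟨a, ha, rfl⟩))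

theorem of_min_le {w u : α → WithTop Γ} (hv : TendstoTopCofinite v) (hw : TendstoTopCofinite w)
    (h : ∀ a, min (v a) (w a) ≤ u a) : TendstoTopCofinite u := fun M => by
  filter_upwards [hv M, hw M] with a hva hwa
  exact (le_min hva hwa).trans (h a)

theorem comp_injective (hv : TendstoTopCofinite v) {f : β → α} (hf : Injective f) :
    TendstoTopCofinite (v ∘ f) :=
  fun M => hf.tendsto_cofinite.eventually (hv M)

end LinearOrder

variable [AddCommGroup Γ] [LinearOrder Γ] [IsOrderedAddMonoid Γ]

theorem of_add_coe {v : α → WithTop Γ} {c : Γ}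
    (h : TendstoTopCofinite fun a => v a + (c : WithTop Γ)) : TendstoTopCofinite v :=
  fun M => (h (M + c)).mono fun a ha => by
    rwa [WithTop.coe_le_add_coe_iff, add_sub_cancel_right] at ha

theorem prod_add {v : α → WithTop Γ} {w : β → WithTop Γ} (hv : TendstoTopCofinite v)
    (hw : TendstoTopCofinite w) : TendstoTopCofinite fun q : α × β => v q.1 + w q.2 := by
  intro M
  obtain ⟨cv, hcv⟩ := hv.exists_forall_coe_le
  obtain ⟨cw, hcw⟩ := hw.exists_forall_coe_le
  have hbad := (eventually_cofinite.1 (hv (M - cw))).prod (eventually_cofinite.1 (hw (M - cv)))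
  filter_upwards [hbad.eventually_cofinite_notMem] with ⟨a, b⟩ hab
  by_cases ha : ((M - cw : Γ) : WithTop Γ) ≤ v a
  · calc (M : WithTop Γ) = ((M - cw : Γ) : WithTop Γ) + cw := by
          rw [← WithTop.coe_add, sub_add_cancel]
      _ ≤ v a + w b := add_le_add ha (hcw b)
  · have hb : ((M - cv : Γ) : WithTop Γ) ≤ w b := by_contra fun hb => hab ⟨ha, hb⟩
    calc (M : WithTop Γ) = cv + ((M - cv : Γ) : WithTop Γ) := by
          rw [← WithTop.coe_add, add_sub_cancel]
      _ ≤ v a + w b := add_le_add (hcv a) hb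

variable {G : Type*} [AddCommGroup G] {v w : G → WithTop Γ}

theorem add_sub (hv : TendstoTopCofinite v) (hw : TendstoTopCofinite w) (a : G) :
    TendstoTopCofinite fun b => v b + w (a - b) :=
  (hv.prod_add hw).comp_injective (f := fun b => (b, a - b)) fun _ _ h => congrArg Prod.fst h

theorem eventually_forall_le_add_sub (hv : TendstoTopCofinite v) (hw : TendstoTopCofinite w)
    (M : Γ) : ∀ᶠ a in cofinite, ∀ b, (M : WithTop Γ) ≤ v b + w (a - b) := by
  have hbad := eventually_cofinite.1 (hv.prod_add hw M)
  filter_upwards [(hbad.image fun q => q.1 + q.2).eventually_cofinite_notMem] with a ha b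
  by_contra hb
  exact ha ⟨(b, a - b), hb, add_sub_cancel b a⟩

end TendstoTopCofinite

namespace HahnSeries.SummableFamily

variable {α Γ R : Type*} [LinearOrder Γ] [AddCommMonoid R]

def ofTendstoTopCofinite [NoMaxOrder Γ] (x : α → HahnSeries Γ R)
    (hx : TendstoTopCofinite fun a => (x a).orderTop) : SummableFamily Γ R α where
  toFun := x
  isPWO_iUnion_support' := by
    rw [Set.isPWO_iff_isWF, Set.isWF_iff_no_descending_seq]
    intro u hu hmem
    obtain ⟨M, hM⟩ := exists_gt (u 0)
    have hS := eventually_cofinite.1 (hx M)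
    have hT : (hS.toFinset.sup fun a => (x a).support).IsWF :=
      (Finset.isWF_sup _).2 fun a _ => (x a).isWF_support
    refine Set.isWF_iff_no_descending_seq.1 hT u hu fun k => ?_
    obtain ⟨a, ha⟩ := Set.mem_iUnion.1 (hmem k)
    rw [Finset.sup_set_eq_biUnion, Set.mem_iUnion₂]
    refine ⟨a, hS.mem_toFinset.2 fun hMa => ?_, ha⟩
    have := (orderTop_le_of_coeff_ne_zero ha).trans_lt
      (WithTop.coe_lt_coe.2 ((hu.antitone (Nat.zero_le k)).trans_lt hM))
    exact this.not_ge hMa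
  finite_co_support' r := by
    obtain ⟨M, hM⟩ := exists_gt r
    refine (eventually_cofinite.1 (hx M)).subset fun a ha hMa => ?_
    exact ((orderTop_le_of_coeff_ne_zero ha).trans_lt (WithTop.coe_lt_coe.2 hM)).not_ge hMa

theorem le_orderTop_hsum {s : SummableFamily Γ R α} {γ : WithTop Γ}
    (h : ∀ a, γ ≤ (s a).orderTop) : γ ≤ s.hsum.orderTop :=
  le_orderTop_iff_forall.2 fun _ hj => by
    rw [coeff_hsum]
    exact finsum_eq_zero_of_forall_eq_zero fun a =>
      coeff_eq_zero_of_lt_orderTop (hj.trans_le (h a))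

end HahnSeries.SummableFamily

section PolytopeAlgebra

variable {n : ℕ}

theorem comap_sum_natAbs_atTop :
    comap (fun A : Fin n → ℤ => ∑ i, (A i).natAbs) atTop = cofinite := by
  rw [← Nat.cofinite_eq_atTop]
  refine le_antisymm (comap_cofinite_le _)
    (Tendsto.le_comap (Tendsto.cofinite_of_finite_preimage_singleton fun N => ?_))
  refine ((Set.finite_Icc (fun _ => -(N : ℤ)) fun _ => (N : ℤ)).subset fun A hA => ?_).to_subtype
  have hle (i) : (A i).natAbs ≤ N := (Set.mem_singleton_iff.1 hA) ▸
    Finset.single_le_sum (f := fun j => (A j).natAbs) (fun _ _ => Nat.zero_le _)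
      (Finset.mem_univ i)
  exact ⟨fun i => show -(N : ℤ) ≤ A i by grind, fun i => show A i ≤ N by grind⟩

noncomputable def polytopeWeight (f : (Fin n → ℤ) → HahnSeries ℝ ℂ) (p : Fin n → ℝ)
    (A : Fin n → ℤ) : WithTop ℝ :=
  (f A).orderTop + ((∑ i, (A i : ℝ) * p i : ℝ) : WithTop ℝ)

theorem memPolytopeAlgebra_iff {P : Set (Fin n → ℝ)} {f : (Fin n → ℤ) → HahnSeries ℝ ℂ} :
    MemPolytopeAlgebra P f ↔ ∀ p ∈ P, TendstoTopCofinite (polytopeWeight f p) := by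
  simp only [MemPolytopeAlgebra, TendstoTopCofinite, polytopeWeight, addVal_apply,
    ← comap_sum_natAbs_atTop, (atTop_basis.comap _).eventually_iff]
  simp

variable {f g : (Fin n → ℤ) → HahnSeries ℝ ℂ} {p : Fin n → ℝ}

theorem min_polytopeWeight_le_polytopeWeight_add (A : Fin n → ℤ) :
    min (polytopeWeight f p A) (polytopeWeight g p A) ≤
      polytopeWeight (fun A => f A + g A) p A := by
  unfold polytopeWeight
  rw [min_add_add_right]
  exact add_le_add_left min_orderTop_le_orderTop_add _

theorem polytopeWeight_add_polytopeWeight_sub (A B : Fin n → ℤ) :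
    polytopeWeight f p B + polytopeWeight g p (A - B) =
      (f B * g (A - B)).orderTop + ((∑ i, (A i : ℝ) * p i : ℝ) : WithTop ℝ) := by
  rw [polytopeWeight, polytopeWeight, orderTop_mul, add_add_add_comm, ← WithTop.coe_add,
    ← Finset.sum_add_distrib]
  simp [← add_mul]

noncomputable def convolutionFamily (hf : TendstoTopCofinite (polytopeWeight f p))
    (hg : TendstoTopCofinite (polytopeWeight g p)) (A : Fin n → ℤ) :
    SummableFamily ℝ ℂ (Fin n → ℤ) :=
  .ofTendstoTopCofinite (fun B => f B * g (A - B)) <| TendstoTopCofinite.of_add_coe <| by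
    simpa only [polytopeWeight_add_polytopeWeight_sub] using hf.add_sub hg A

theorem tendstoTopCofinite_polytopeWeight_hsum
    {F : (Fin n → ℤ) → SummableFamily ℝ ℂ (Fin n → ℤ)} (hF : ∀ A B, F A B = f B * g (A - B))
    (hf : TendstoTopCofinite (polytopeWeight f p))
    (hg : TendstoTopCofinite (polytopeWeight g p)) :
    TendstoTopCofinite (polytopeWeight (fun A => (F A).hsum) p) := fun M => by
  filter_upwards [hf.eventually_forall_le_add_sub hg M] with A hA
  rw [polytopeWeight, WithTop.coe_le_add_coe_iff]
  refine SummableFamily.le_orderTop_hsum fun B => ?_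
  rw [← WithTop.coe_le_add_coe_iff, hF, ← polytopeWeight_add_polytopeWeight_sub]
  exact hA B

end PolytopeAlgebra

/-- The polytope algebra `𝒪_P` is closed under addition, and under the convolution product:
each coefficient `(f·g)_A = ∑_{B+C=A} f_B g_C` is a convergent (summable-family) sum in the
Novikov field, and the resulting family again lies in `𝒪_P`. -/
theorem polytopeAlgebra_closed_add_mul {n : ℕ} (P : Set (Fin n → ℝ)) (hP : P.Nonempty)
    (f g : (Fin n → ℤ) → HahnSeries ℝ ℂ)
    (hf : MemPolytopeAlgebra P f) (hg : MemPolytopeAlgebra P g) :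
    MemPolytopeAlgebra P (fun A => f A + g A) ∧
    ∃ h : (Fin n → ℤ) → HahnSeries ℝ ℂ, MemPolytopeAlgebra P h ∧
      ∀ A : Fin n → ℤ, ∃ F : HahnSeries.SummableFamily ℝ ℂ (Fin n → ℤ),
        (∀ B, F B = f B * g (A - B)) ∧ h A = F.hsum := by
  simp only [memPolytopeAlgebra_iff] at hf hg ⊢
  obtain ⟨p₀, hp₀⟩ := hP
  let F := convolutionFamily (hf p₀ hp₀) (hg p₀ hp₀)
  exact ⟨fun p hp => (hf p hp).of_min_le (hg p hp) min_polytopeWeight_le_polytopeWeight_add,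
    fun A => (F A).hsum,
    fun p hp => tendstoTopCofinite_polytopeWeight_hsum (fun _ _ => rfl) (hf p hp) (hg p hp),
    fun A => ⟨F A, fun _ => rfl, rfl⟩⟩
end
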